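/- For every integer r ≥ 1, one has ∫₀^π |sin((r+1)θ)| · sin θ dθ = (2(r+1) / (r(r+2))) · cot(π / (2(r+1))). Equivalently, 1 − (2/π) ∫₀^π (|sin((r+1)θ)| / sin θ) · (sin θ)² dθ = 1 − (4(r+1) / (r(r+2)π)) · cot(π / (2(r+1))). -/

import Mathlib

/-!
On the `k`-th arch `[kπ/n, (k+1)π/n]` of `sin (n θ)` the sign of `sin (n θ)` is `(-1)^k`, so the
integral over that arch is read off the product-to-sum primitive of `sin (n θ) sin θ`; it equals
`n / (n² - 1) · (sin (kπ/n) + sin ((k+1)π/n))`. Summing over the `n` arches, the boundary terms at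
`0` and `π` vanish and what remains is `2n / (n² - 1) · ∑ₖ sin (kπ/n)`, and the closed form of
a sum of sines in arithmetic progression gives `∑ₖ sin (kπ/n) = cot (π / 2n)`.
-/

noncomputable section

open Real Finset

lemma div_mul_sq_self {G₀ : Type*} [GroupWithZero G₀] (a b : G₀) : a / b * b ^ 2 = a * b := by
  rcases eq_or_ne b 0 with rfl | hb
  · simp
  · rw [sq, ← mul_assoc, div_mul_cancel₀ a hb]

lemma sum_range_sin_nat_mul_pi_div (n : ℕ) (hn : n ≠ 0) :
    ∑ k ∈ range n, sin (k * π / n) = cot (π / (2 * n)) := by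
  have hn' : (n : ℝ) ≠ 0 := by exact_mod_cast hn
  have h := sin_mul_sum_sin n (π / n) 0
  have hsum : ∀ k : ℕ, π / n * k + 0 = k * π / n := fun k => by ring
  have hcos : sin ((n - 1) * (π / n) / 2 + 0) = cos (π / (2 * n)) := by
    rw [← sin_pi_div_two_sub]; congr 1; field_simp; ring
  have hone : sin (n * (π / n) / 2) = 1 := by
    rw [mul_div_cancel₀ _ hn', sin_pi_div_two]
  simp only [hsum, hcos, hone, one_mul, show π / n / 2 = π / (2 * n) by ring] at h
  have hpos : 0 < sin (π / (2 * n)) := by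
    apply sin_pos_of_pos_of_lt_pi (by positivity)
    rw [div_lt_iff₀ (by positivity)]
    have : (1 : ℝ) ≤ n := by exact_mod_cast Nat.one_le_iff_ne_zero.mpr hn
    nlinarith [pi_pos]
  rw [cot_eq_cos_div_sin, ← h, mul_div_cancel_left₀ _ hpos.ne']

lemma abs_sin_eq_neg_one_pow_mul_sin (k : ℕ) {x : ℝ} (h₀ : k * π ≤ x) (h₁ : x ≤ (k + 1) * π) :
    |sin x| = (-1) ^ k * sin x := by
  have hx : sin x = (-1) ^ k * sin (x - k * π) := by
    rw [← sin_add_nat_mul_pi, sub_add_cancel]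
  have hnn : 0 ≤ sin (x - k * π) := sin_nonneg_of_nonneg_of_le_pi (by linarith) (by linarith)
  rw [hx, abs_mul, abs_pow, abs_neg, abs_one, one_pow, one_mul, abs_of_nonneg hnn, ← mul_assoc,
    ← mul_pow, neg_one_mul, neg_neg, one_pow, one_mul]

def sinMulSinPrimitive (N x : ℝ) : ℝ :=
  (sin ((N - 1) * x) / (N - 1) - sin ((N + 1) * x) / (N + 1)) / 2

lemma hasDerivAt_sinMulSinPrimitive {N : ℝ} (h₁ : N - 1 ≠ 0) (h₂ : N + 1 ≠ 0) (x : ℝ) :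
    HasDerivAt (sinMulSinPrimitive N) (sin (N * x) * sin x) x := by
  have hsin : ∀ c, HasDerivAt (fun y => sin (c * y)) (cos (c * x) * c) x := fun c =>
    ((hasDerivAt_id x).const_mul c).sin.congr_deriv (by simp)
  unfold sinMulSinPrimitive
  refine (((hsin (N - 1)).div_const (N - 1)).sub
    ((hsin (N + 1)).div_const (N + 1))).div_const 2 |>.congr_deriv ?_
  rw [mul_div_cancel_right₀ _ h₁, mul_div_cancel_right₀ _ h₂, cos_sub_cos]
  rw [show ((N - 1) * x + (N + 1) * x) / 2 = N * x by ring,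
    show ((N - 1) * x - (N + 1) * x) / 2 = -x by ring, sin_neg]
  ring

lemma sinMulSinPrimitive_nat_mul_pi_div {N : ℝ} (h₀ : N ≠ 0) (h₁ : N - 1 ≠ 0) (h₂ : N + 1 ≠ 0)
    (k : ℕ) :
    sinMulSinPrimitive N (k * π / N) = -((-1) ^ k * sin (k * π / N)) * (N / (N ^ 2 - 1)) := by
  have e₁ : (N - 1) * (k * π / N) = k * π - k * π / N := by field_simp
  have e₂ : (N + 1) * (k * π / N) = k * π / N + k * π := by field_simp; ring
  have hsq : N ^ 2 - 1 ≠ 0 := by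
    rw [show N ^ 2 - 1 = (N - 1) * (N + 1) by ring]; exact mul_ne_zero h₁ h₂
  rw [sinMulSinPrimitive, e₁, e₂, sin_nat_mul_pi_sub, sin_add_nat_mul_pi]
  field_simp
  ring

lemma integral_abs_sin_mul_mul_sin_nat_mul_pi_div {N : ℝ} (h₀ : 0 < N) (h₁ : N ≠ 1) (k : ℕ) :
    ∫ θ in k * π / N..(k + 1) * π / N, |sin (N * θ)| * sin θ
      = (sin ((k + 1) * π / N) + sin (k * π / N)) * (N / (N ^ 2 - 1)) := by
  have hsign : Set.EqOn (fun θ => |sin (N * θ)| * sin θ) (fun θ => (-1) ^ k * (sin (N * θ) * sin θ))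
      (Set.uIcc (k * π / N) ((k + 1) * π / N)) := by
    intro θ hθ
    rw [Set.uIcc_of_le (by gcongr; linarith), Set.mem_Icc, div_le_iff₀ h₀, le_div_iff₀ h₀] at hθ
    dsimp only
    rw [abs_sin_eq_neg_one_pow_mul_sin k (by linarith) (by linarith), mul_assoc]
  have hN₁ : N - 1 ≠ 0 := sub_ne_zero.mpr h₁
  have hN₂ : N + 1 ≠ 0 := by linarith
  rw [intervalIntegral.integral_congr hsign, intervalIntegral.integral_const_mul,
    intervalIntegral.integral_eq_sub_of_hasDerivAt
      (fun θ _ => hasDerivAt_sinMulSinPrimitive hN₁ hN₂ θ)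
      (by apply Continuous.intervalIntegrable; fun_prop)]
  have hsucc := sinMulSinPrimitive_nat_mul_pi_div h₀.ne' hN₁ hN₂ (k + 1)
  push_cast at hsucc
  rw [hsucc, sinMulSinPrimitive_nat_mul_pi_div h₀.ne' hN₁ hN₂ k, pow_succ]
  have hsq : ((-1 : ℝ) ^ k) ^ 2 = 1 := by rw [← pow_mul, Even.neg_one_pow ⟨k, by ring⟩]
  linear_combination (sin ((k + 1) * π / N) + sin (k * π / N)) * (N / (N ^ 2 - 1)) * hsq

lemma integral_abs_sin_nat_mul_mul_sin (n : ℕ) (hn : 1 < n) :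
    ∫ θ in (0 : ℝ)..π, |sin (n * θ)| * sin θ = 2 * n / (n ^ 2 - 1) * cot (π / (2 * n)) := by
  have hn₀ : (0 : ℝ) < n := by positivity
  have hn₁ : (n : ℝ) ≠ 1 := by exact_mod_cast hn.ne'
  set s : ℕ → ℝ := fun k => sin (k * π / n)
  have hsplit := intervalIntegral.sum_integral_adjacent_intervals
    (a := fun k : ℕ => k * π / n) (f := fun θ => |sin (n * θ)| * sin θ) (n := n)
    (μ := MeasureTheory.volume)
    fun _ _ => by apply Continuous.intervalIntegrable; fun_prop
  simp only [Nat.cast_zero, zero_mul, zero_div, Nat.cast_add, Nat.cast_one,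
    mul_div_cancel_left₀ _ hn₀.ne', integral_abs_sin_mul_mul_sin_nat_mul_pi_div hn₀ hn₁] at hsplit
  have hshift : ∑ k ∈ range n, s (k + 1) = ∑ k ∈ range n, s k := by
    have h₁ := sum_range_succ' s n
    have h₂ := sum_range_succ s n
    have hs₀ : s 0 = 0 := by simp [s]
    have hsn : s n = 0 := by simp [s, mul_div_cancel_left₀ _ hn₀.ne']
    linarith
  simp only [s, Nat.cast_add, Nat.cast_one] at hshift
  rw [← hsplit, ← sum_mul, sum_add_distrib, hshift, sum_range_sin_nat_mul_pi_div n (by omega)]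
  ring

theorem integral_abs_sin_mul_sin (r : ℕ) (hr : 1 ≤ r) :
    (∫ θ in (0:ℝ)..Real.pi, |Real.sin (((r : ℝ) + 1) * θ)| * Real.sin θ) =
      (2 * ((r : ℝ) + 1) / ((r : ℝ) * ((r : ℝ) + 2))) *
        Real.cot (Real.pi / (2 * ((r : ℝ) + 1))) ∧
    1 - (2 / Real.pi) * ∫ θ in (0:ℝ)..Real.pi,
        (|Real.sin (((r : ℝ) + 1) * θ)| / Real.sin θ) * Real.sin θ ^ 2 =
      1 - (4 * ((r : ℝ) + 1) / ((r : ℝ) * ((r : ℝ) + 2) * Real.pi)) *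
        Real.cot (Real.pi / (2 * ((r : ℝ) + 1))) := by
  have hint : ∫ θ in (0:ℝ)..π, |sin ((r + 1) * θ)| * sin θ
      = 2 * (r + 1) / (r * (r + 2)) * cot (π / (2 * (r + 1))) := by
    have h := integral_abs_sin_nat_mul_mul_sin (r + 1) (by omega)
    push_cast at h
    rw [h, show ((r : ℝ) + 1) ^ 2 - 1 = r * (r + 2) by ring]
  refine ⟨hint, ?_⟩
  rw [intervalIntegral.integral_congr fun θ _ => div_mul_sq_self _ (sin θ), hint]
  field_simp
  ring
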